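/- There exists a constant C > 0 such that for every σ with 0 ≤ σ ≤ 1 and all real numbers ξ1, ξ2, ξ3, ξ4 with ξ1 + ξ2 + ξ3 + ξ4 = 0, one has Σ_{k=0}^∞ (σ^{k+4}/(k+4)!) ( Θ1(k) + Θ2(k) ) ≤ C · ( Σ_{(p1,p2): p1 ≠ p2, p1,p2 ∈ {1,2,3,4}} 1/((1+|ξ_{p1}|)(1+|ξ_{p2}|)) ) · e^{σ(|ξ1|+|ξ2|+|ξ3|+|ξ4|)}. -/
import Mathlib


open Finset

/-- The quantity `Θ1(k)` of (3.65), with `ξ 0, ξ 1, ξ 2, ξ 3` playing the roles of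
`ξ1, ξ2, ξ3, ξ4`.  The second sum ranges over the 24 ordered triples of pairwise
distinct indices `(p1, p2, p3)` in `{1, 2, 3, 4}`. -/
noncomputable def Theta1 (ξ : Fin 4 → ℝ) (k : ℕ) : ℝ :=
  (∑ p ∈ antidiagonal k,
      ( |ξ 0| ^ p.1 * |ξ 0 + ξ 3| ^ p.2 + |ξ 1| ^ p.1 * |ξ 1 + ξ 3| ^ p.2
      + |ξ 2| ^ p.1 * |ξ 2 + ξ 3| ^ p.2 + |ξ 3| ^ p.1 * |ξ 2 + ξ 3| ^ p.2 ))
  + ∑ p ∈ antidiagonal k,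
      ∑ t ∈ (Finset.univ : Finset (Fin 4 × Fin 4 × Fin 4)).filter
          (fun t => t.1 ≠ t.2.1 ∧ t.1 ≠ t.2.2 ∧ t.2.1 ≠ t.2.2),
        |ξ t.1| ^ p.1 *
          ∑ q ∈ antidiagonal p.2, |ξ t.2.1| ^ q.1 * |ξ t.2.1 + ξ t.2.2| ^ q.2

/-- The quantity `Θ2(k)` of (3.66), with `ξ 0, ξ 1, ξ 2, ξ 3` playing the roles of
`ξ1, ξ2, ξ3, ξ4`. -/
noncomputable def Theta2 (ξ : Fin 4 → ℝ) (k : ℕ) : ℝ :=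
  (∑ p ∈ antidiagonal k, (|ξ 0| ^ p.1 * |ξ 3| ^ p.2 + |ξ 1| ^ p.1 * |ξ 2| ^ p.2))
  + ∑ p ∈ antidiagonal k,
      |ξ 2| ^ p.1 * ∑ q ∈ antidiagonal p.2, |ξ 0| ^ q.1 * |ξ 3| ^ q.2
  + ∑ p ∈ antidiagonal k,
      |ξ 3| ^ p.2 * ∑ q ∈ antidiagonal p.1, |ξ 1| ^ q.1 * |ξ 2| ^ q.2
  + ∑ p ∈ antidiagonal k,
      |ξ 3| ^ p.1 * ∑ q ∈ antidiagonal p.2, |ξ 3| ^ q.1 * |ξ 0| ^ q.2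
  + ∑ p ∈ antidiagonal k,
      (∑ q ∈ antidiagonal p.1, |ξ 0| ^ q.1 * |ξ 3| ^ q.2) *
      (∑ q ∈ antidiagonal p.2, |ξ 1| ^ q.1 * |ξ 3| ^ q.2)
  + ∑ p ∈ antidiagonal k,
      |ξ 3| ^ p.1 *
        ∑ q ∈ antidiagonal p.2,
          ( |ξ 0| ^ q.2 * ∑ r ∈ antidiagonal q.1, |ξ 2| ^ r.1 * |ξ 1| ^ r.2
          + |ξ 1| ^ q.1 * ∑ r ∈ antidiagonal q.2, |ξ 3| ^ r.1 * |ξ 0| ^ r.2 )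

lemma antidiag_pow_le {A B : ℝ} (hA : 0 ≤ A) (hB : 0 ≤ B) (n : ℕ) :
    ∑ q ∈ antidiagonal n, A ^ q.1 * B ^ q.2 ≤ (A + B) ^ n := by
  rw [Finset.Nat.sum_antidiagonal_eq_sum_range_succ_mk, add_pow]
  refine Finset.sum_le_sum fun i hi => ?_
  have hin : i ≤ n := Nat.lt_succ_iff.mp (Finset.mem_range.mp hi)
  have h1 : (1 : ℝ) ≤ (n.choose i : ℝ) := by
    exact_mod_cast Nat.one_le_iff_ne_zero.mpr (Nat.choose_pos hin).ne'
  have h2 : (0:ℝ) ≤ A ^ i * B ^ (n - i) := by positivity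
  nlinarith

lemma mul_pow_le {A B S : ℝ} (hA : 0 ≤ A) (hB : 0 ≤ B) (hAS : A ≤ S) (hBS : B ≤ S)
    {i j k : ℕ} (hk : i + j = k) : A ^ i * B ^ j ≤ S ^ k := by
  subst hk
  have hS : 0 ≤ S := hA.trans hAS
  rw [pow_add]
  exact mul_le_mul (pow_le_pow_left₀ hA hAS i) (pow_le_pow_left₀ hB hBS j)
    (pow_nonneg hB j) (pow_nonneg hS i)

lemma antidiag_nonneg {A B : ℝ} (hA : 0 ≤ A) (hB : 0 ≤ B) (n : ℕ) :
    0 ≤ ∑ q ∈ antidiagonal n, A ^ q.1 * B ^ q.2 :=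
  Finset.sum_nonneg fun q _ => by positivity

lemma antidiag_le_S {A B S : ℝ} (hA : 0 ≤ A) (hB : 0 ≤ B) (hABS : A + B ≤ S) (n : ℕ) :
    ∑ q ∈ antidiagonal n, A ^ q.1 * B ^ q.2 ≤ S ^ n :=
  (antidiag_pow_le hA hB n).trans (pow_le_pow_left₀ (by positivity) hABS n)

lemma sum_antidiag_le {f : ℕ × ℕ → ℝ} {c : ℝ} (n : ℕ)
    (h : ∀ p ∈ antidiagonal n, f p ≤ c) :
    ∑ p ∈ antidiagonal n, f p ≤ (n + 1 : ℝ) * c := by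
  have := Finset.sum_le_card_nsmul (antidiagonal n) f c h
  rwa [Finset.Nat.card_antidiagonal, nsmul_eq_mul, Nat.cast_add, Nat.cast_one] at this


lemma key4 (x y z w : ℝ) (h : x + y + z + w = 0) :
    |x| + |x + y| ≤ |x| + |y| + |z| + |w| := by
  have h1 : |x + y| = |z + w| := by rw [show x + y = -(z + w) by linarith, abs_neg]
  have h2 := abs_add_le z w
  have h3 := abs_nonneg y
  linarith

lemma pair_bound (ξ : Fin 4 → ℝ) (h : ξ 0 + ξ 1 + ξ 2 + ξ 3 = 0)
    (a b : Fin 4) (hab : a ≠ b) :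
    |ξ a| + |ξ a + ξ b| ≤ |ξ 0| + |ξ 1| + |ξ 2| + |ξ 3| := by
  fin_cases a <;> fin_cases b <;> simp only [Fin.zero_eta, Fin.mk_one, Fin.reduceFinMk] at hab ⊢ <;>
    first
    | exact absurd rfl hab
    | linarith [key4 (ξ 0) (ξ 1) (ξ 2) (ξ 3) (by linarith),
        key4 (ξ 0) (ξ 2) (ξ 1) (ξ 3) (by linarith),
        key4 (ξ 0) (ξ 3) (ξ 1) (ξ 2) (by linarith),
        key4 (ξ 1) (ξ 0) (ξ 2) (ξ 3) (by linarith),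
        key4 (ξ 1) (ξ 2) (ξ 0) (ξ 3) (by linarith),
        key4 (ξ 1) (ξ 3) (ξ 0) (ξ 2) (by linarith),
        key4 (ξ 2) (ξ 0) (ξ 1) (ξ 3) (by linarith),
        key4 (ξ 2) (ξ 1) (ξ 0) (ξ 3) (by linarith),
        key4 (ξ 2) (ξ 3) (ξ 0) (ξ 1) (by linarith),
        key4 (ξ 3) (ξ 0) (ξ 1) (ξ 2) (by linarith),
        key4 (ξ 3) (ξ 1) (ξ 0) (ξ 2) (by linarith),
        key4 (ξ 3) (ξ 2) (ξ 0) (ξ 1) (by linarith)]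

lemma abs_le_S (ξ : Fin 4 → ℝ) (i : Fin 4) : |ξ i| ≤ |ξ 0| + |ξ 1| + |ξ 2| + |ξ 3| := by
  fin_cases i <;> simp only [Fin.zero_eta, Fin.mk_one, Fin.reduceFinMk] <;>
    linarith [abs_nonneg (ξ 0), abs_nonneg (ξ 1), abs_nonneg (ξ 2), abs_nonneg (ξ 3)]


lemma theta1_nonneg (ξ : Fin 4 → ℝ) (k : ℕ) : 0 ≤ Theta1 ξ k := by
  rw [Theta1]
  have h1 : ∀ p ∈ antidiagonal k,
      (0:ℝ) ≤ |ξ 0| ^ p.1 * |ξ 0 + ξ 3| ^ p.2 + |ξ 1| ^ p.1 * |ξ 1 + ξ 3| ^ p.2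
      + |ξ 2| ^ p.1 * |ξ 2 + ξ 3| ^ p.2 + |ξ 3| ^ p.1 * |ξ 2 + ξ 3| ^ p.2 :=
    fun p _ => by positivity
  have h2 : ∀ p ∈ antidiagonal k, (0:ℝ) ≤
      ∑ t ∈ (Finset.univ : Finset (Fin 4 × Fin 4 × Fin 4)).filter
          (fun t => t.1 ≠ t.2.1 ∧ t.1 ≠ t.2.2 ∧ t.2.1 ≠ t.2.2),
        |ξ t.1| ^ p.1 *
          ∑ q ∈ antidiagonal p.2, |ξ t.2.1| ^ q.1 * |ξ t.2.1 + ξ t.2.2| ^ q.2 := by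
    intro p _
    refine Finset.sum_nonneg fun t _ => ?_
    exact mul_nonneg (by positivity) (antidiag_nonneg (abs_nonneg _) (abs_nonneg _) p.2)
  exact add_nonneg (Finset.sum_nonneg h1) (Finset.sum_nonneg h2)

lemma theta2_nonneg (ξ : Fin 4 → ℝ) (k : ℕ) : 0 ≤ Theta2 ξ k := by
  rw [Theta2]
  have a0 := abs_nonneg (ξ 0); have a1 := abs_nonneg (ξ 1)
  have a2 := abs_nonneg (ξ 2); have a3 := abs_nonneg (ξ 3)
  repeat refine add_nonneg ?_ ?_
  · exact Finset.sum_nonneg fun p _ => by positivity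
  · exact Finset.sum_nonneg fun p _ =>
      mul_nonneg (by positivity) (antidiag_nonneg a0 a3 p.2)
  · exact Finset.sum_nonneg fun p _ =>
      mul_nonneg (by positivity) (antidiag_nonneg a1 a2 p.1)
  · exact Finset.sum_nonneg fun p _ =>
      mul_nonneg (by positivity) (antidiag_nonneg a3 a0 p.2)
  · exact Finset.sum_nonneg fun p _ =>
      mul_nonneg (antidiag_nonneg a0 a3 p.1) (antidiag_nonneg a1 a3 p.2)
  · refine Finset.sum_nonneg fun p _ => mul_nonneg (by positivity) ?_
    refine Finset.sum_nonneg fun q _ => add_nonneg ?_ ?_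
    · exact mul_nonneg (by positivity) (antidiag_nonneg a2 a1 q.1)
    · exact mul_nonneg (by positivity) (antidiag_nonneg a3 a0 q.2)

lemma theta1_le (ξ : Fin 4 → ℝ) (h : ξ 0 + ξ 1 + ξ 2 + ξ 3 = 0) (k : ℕ) :
    Theta1 ξ k ≤ 68 * ((k : ℝ) + 1) * (|ξ 0| + |ξ 1| + |ξ 2| + |ξ 3|) ^ k := by
  set S := |ξ 0| + |ξ 1| + |ξ 2| + |ξ 3| with hSdef
  have hS : 0 ≤ S := by positivity
  have habs : ∀ i, |ξ i| ≤ S := abs_le_S ξ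
  have hpair := pair_bound ξ h
  have hSk : 0 ≤ S ^ k := pow_nonneg hS k
  have e03 : |ξ 0 + ξ 3| ≤ S := by
    have := hpair 0 3 (by decide); have := abs_nonneg (ξ 0); linarith
  have e13 : |ξ 1 + ξ 3| ≤ S := by
    have := hpair 1 3 (by decide); have := abs_nonneg (ξ 1); linarith
  have e23 : |ξ 2 + ξ 3| ≤ S := by
    have := hpair 2 3 (by decide); have := abs_nonneg (ξ 2); linarith
  rw [Theta1]
  have h1 : (∑ p ∈ antidiagonal k,
      ( |ξ 0| ^ p.1 * |ξ 0 + ξ 3| ^ p.2 + |ξ 1| ^ p.1 * |ξ 1 + ξ 3| ^ p.2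
      + |ξ 2| ^ p.1 * |ξ 2 + ξ 3| ^ p.2 + |ξ 3| ^ p.1 * |ξ 2 + ξ 3| ^ p.2 ))
      ≤ ((k : ℝ) + 1) * (4 * S ^ k) := by
    refine sum_antidiag_le k fun p hp => ?_
    have hpk : p.1 + p.2 = k := Finset.HasAntidiagonal.mem_antidiagonal.mp hp
    have t1 := mul_pow_le (abs_nonneg (ξ 0)) (abs_nonneg _) (habs 0) e03 hpk
    have t2 := mul_pow_le (abs_nonneg (ξ 1)) (abs_nonneg _) (habs 1) e13 hpk
    have t3 := mul_pow_le (abs_nonneg (ξ 2)) (abs_nonneg _) (habs 2) e23 hpk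
    have t4 := mul_pow_le (abs_nonneg (ξ 3)) (abs_nonneg _) (habs 3) e23 hpk
    linarith
  have h2 : (∑ p ∈ antidiagonal k,
      ∑ t ∈ (Finset.univ : Finset (Fin 4 × Fin 4 × Fin 4)).filter
          (fun t => t.1 ≠ t.2.1 ∧ t.1 ≠ t.2.2 ∧ t.2.1 ≠ t.2.2),
        |ξ t.1| ^ p.1 *
          ∑ q ∈ antidiagonal p.2, |ξ t.2.1| ^ q.1 * |ξ t.2.1 + ξ t.2.2| ^ q.2)
      ≤ ((k : ℝ) + 1) * (64 * S ^ k) := by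
    refine sum_antidiag_le k fun p hp => ?_
    have hpk : p.1 + p.2 = k := Finset.HasAntidiagonal.mem_antidiagonal.mp hp
    have hterm : ∀ t ∈ (Finset.univ : Finset (Fin 4 × Fin 4 × Fin 4)).filter
          (fun t => t.1 ≠ t.2.1 ∧ t.1 ≠ t.2.2 ∧ t.2.1 ≠ t.2.2),
        |ξ t.1| ^ p.1 *
          (∑ q ∈ antidiagonal p.2, |ξ t.2.1| ^ q.1 * |ξ t.2.1 + ξ t.2.2| ^ q.2) ≤ S ^ k := by
      intro t ht
      have hne : t.2.1 ≠ t.2.2 := (Finset.mem_filter.mp ht).2.2.2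
      have hinner : (∑ q ∈ antidiagonal p.2, |ξ t.2.1| ^ q.1 * |ξ t.2.1 + ξ t.2.2| ^ q.2)
          ≤ S ^ p.2 :=
        antidiag_le_S (abs_nonneg _) (abs_nonneg _) (hpair t.2.1 t.2.2 hne) p.2
      calc |ξ t.1| ^ p.1 * (∑ q ∈ antidiagonal p.2, |ξ t.2.1| ^ q.1 * |ξ t.2.1 + ξ t.2.2| ^ q.2)
          ≤ S ^ p.1 * S ^ p.2 :=
            mul_le_mul (pow_le_pow_left₀ (abs_nonneg _) (habs t.1) p.1) hinner
              (antidiag_nonneg (abs_nonneg _) (abs_nonneg _) p.2) (pow_nonneg hS p.1)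
        _ = S ^ k := by rw [← pow_add, hpk]
    have hsum := Finset.sum_le_card_nsmul _ _ _ hterm
    have hcard : (((Finset.univ : Finset (Fin 4 × Fin 4 × Fin 4)).filter
          (fun t => t.1 ≠ t.2.1 ∧ t.1 ≠ t.2.2 ∧ t.2.1 ≠ t.2.2)).card : ℝ) ≤ 64 := by
      have := Finset.card_filter_le (Finset.univ : Finset (Fin 4 × Fin 4 × Fin 4))
          (fun t => t.1 ≠ t.2.1 ∧ t.1 ≠ t.2.2 ∧ t.2.1 ≠ t.2.2)
      have h64 : (Finset.univ : Finset (Fin 4 × Fin 4 × Fin 4)).card = 64 := by simp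
      exact_mod_cast (h64 ▸ this)
    rw [nsmul_eq_mul] at hsum
    calc _ ≤ _ := hsum
      _ ≤ 64 * S ^ k := mul_le_mul_of_nonneg_right hcard hSk
  have hring : ((k : ℝ) + 1) * (4 * S ^ k) + ((k : ℝ) + 1) * (64 * S ^ k)
      = 68 * ((k : ℝ) + 1) * S ^ k := by ring
  linarith

lemma theta2_le (ξ : Fin 4 → ℝ) (k : ℕ) :
    Theta2 ξ k ≤ 8 * ((k : ℝ) + 1) ^ 2 * (|ξ 0| + |ξ 1| + |ξ 2| + |ξ 3|) ^ k := by
  set S := |ξ 0| + |ξ 1| + |ξ 2| + |ξ 3| with hSdef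
  have a0 := abs_nonneg (ξ 0); have a1 := abs_nonneg (ξ 1)
  have a2 := abs_nonneg (ξ 2); have a3 := abs_nonneg (ξ 3)
  have hS : 0 ≤ S := by positivity
  have hSk : 0 ≤ S ^ k := pow_nonneg hS k
  have h0 : |ξ 0| ≤ S := by linarith
  have h1 : |ξ 1| ≤ S := by linarith
  have h2 : |ξ 2| ≤ S := by linarith
  have h3 : |ξ 3| ≤ S := by linarith
  have h03 : |ξ 0| + |ξ 3| ≤ S := by linarith
  have h12 : |ξ 1| + |ξ 2| ≤ S := by linarith
  have h30 : |ξ 3| + |ξ 0| ≤ S := by linarith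
  have h13 : |ξ 1| + |ξ 3| ≤ S := by linarith
  have h21 : |ξ 2| + |ξ 1| ≤ S := by linarith
  rw [Theta2]
  have b1 : (∑ p ∈ antidiagonal k, (|ξ 0| ^ p.1 * |ξ 3| ^ p.2 + |ξ 1| ^ p.1 * |ξ 2| ^ p.2))
      ≤ ((k : ℝ) + 1) * (2 * S ^ k) := by
    refine sum_antidiag_le k fun p hp => ?_
    have hpk : p.1 + p.2 = k := Finset.HasAntidiagonal.mem_antidiagonal.mp hp
    have t1 := mul_pow_le a0 a3 h0 h3 hpk
    have t2 := mul_pow_le a1 a2 h1 h2 hpk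
    linarith
  have b2 : (∑ p ∈ antidiagonal k,
      |ξ 2| ^ p.1 * ∑ q ∈ antidiagonal p.2, |ξ 0| ^ q.1 * |ξ 3| ^ q.2)
      ≤ ((k : ℝ) + 1) * S ^ k := by
    refine sum_antidiag_le k fun p hp => ?_
    have hpk : p.1 + p.2 = k := Finset.HasAntidiagonal.mem_antidiagonal.mp hp
    calc |ξ 2| ^ p.1 * ∑ q ∈ antidiagonal p.2, |ξ 0| ^ q.1 * |ξ 3| ^ q.2
        ≤ S ^ p.1 * S ^ p.2 :=
          mul_le_mul (pow_le_pow_left₀ a2 h2 p.1) (antidiag_le_S a0 a3 h03 p.2)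
            (antidiag_nonneg a0 a3 p.2) (pow_nonneg hS p.1)
      _ = S ^ k := by rw [← pow_add, hpk]
  have b3 : (∑ p ∈ antidiagonal k,
      |ξ 3| ^ p.2 * ∑ q ∈ antidiagonal p.1, |ξ 1| ^ q.1 * |ξ 2| ^ q.2)
      ≤ ((k : ℝ) + 1) * S ^ k := by
    refine sum_antidiag_le k fun p hp => ?_
    have hpk : p.1 + p.2 = k := Finset.HasAntidiagonal.mem_antidiagonal.mp hp
    calc |ξ 3| ^ p.2 * ∑ q ∈ antidiagonal p.1, |ξ 1| ^ q.1 * |ξ 2| ^ q.2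
        ≤ S ^ p.2 * S ^ p.1 :=
          mul_le_mul (pow_le_pow_left₀ a3 h3 p.2) (antidiag_le_S a1 a2 h12 p.1)
            (antidiag_nonneg a1 a2 p.1) (pow_nonneg hS p.2)
      _ = S ^ k := by rw [← pow_add, Nat.add_comm, hpk]
  have b4 : (∑ p ∈ antidiagonal k,
      |ξ 3| ^ p.1 * ∑ q ∈ antidiagonal p.2, |ξ 3| ^ q.1 * |ξ 0| ^ q.2)
      ≤ ((k : ℝ) + 1) * S ^ k := by
    refine sum_antidiag_le k fun p hp => ?_
    have hpk : p.1 + p.2 = k := Finset.HasAntidiagonal.mem_antidiagonal.mp hp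
    calc |ξ 3| ^ p.1 * ∑ q ∈ antidiagonal p.2, |ξ 3| ^ q.1 * |ξ 0| ^ q.2
        ≤ S ^ p.1 * S ^ p.2 :=
          mul_le_mul (pow_le_pow_left₀ a3 h3 p.1) (antidiag_le_S a3 a0 h30 p.2)
            (antidiag_nonneg a3 a0 p.2) (pow_nonneg hS p.1)
      _ = S ^ k := by rw [← pow_add, hpk]
  have b5 : (∑ p ∈ antidiagonal k,
      (∑ q ∈ antidiagonal p.1, |ξ 0| ^ q.1 * |ξ 3| ^ q.2) *
      (∑ q ∈ antidiagonal p.2, |ξ 1| ^ q.1 * |ξ 3| ^ q.2))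
      ≤ ((k : ℝ) + 1) * S ^ k := by
    refine sum_antidiag_le k fun p hp => ?_
    have hpk : p.1 + p.2 = k := Finset.HasAntidiagonal.mem_antidiagonal.mp hp
    calc (∑ q ∈ antidiagonal p.1, |ξ 0| ^ q.1 * |ξ 3| ^ q.2) *
        (∑ q ∈ antidiagonal p.2, |ξ 1| ^ q.1 * |ξ 3| ^ q.2)
        ≤ S ^ p.1 * S ^ p.2 :=
          mul_le_mul (antidiag_le_S a0 a3 h03 p.1) (antidiag_le_S a1 a3 h13 p.2)
            (antidiag_nonneg a1 a3 p.2) (pow_nonneg hS p.1)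
      _ = S ^ k := by rw [← pow_add, hpk]
  have b6 : (∑ p ∈ antidiagonal k,
      |ξ 3| ^ p.1 *
        ∑ q ∈ antidiagonal p.2,
          ( |ξ 0| ^ q.2 * ∑ r ∈ antidiagonal q.1, |ξ 2| ^ r.1 * |ξ 1| ^ r.2
          + |ξ 1| ^ q.1 * ∑ r ∈ antidiagonal q.2, |ξ 3| ^ r.1 * |ξ 0| ^ r.2 ))
      ≤ ((k : ℝ) + 1) * (((k : ℝ) + 1) * (2 * S ^ k)) := by
    refine sum_antidiag_le k fun p hp => ?_
    have hpk : p.1 + p.2 = k := Finset.HasAntidiagonal.mem_antidiagonal.mp hp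
    have hp2k : ((p.2 : ℝ) + 1) ≤ ((k : ℝ) + 1) := by
      have : p.2 ≤ k := by omega
      exact_mod_cast Nat.succ_le_succ this
    have hinner : (∑ q ∈ antidiagonal p.2,
          ( |ξ 0| ^ q.2 * ∑ r ∈ antidiagonal q.1, |ξ 2| ^ r.1 * |ξ 1| ^ r.2
          + |ξ 1| ^ q.1 * ∑ r ∈ antidiagonal q.2, |ξ 3| ^ r.1 * |ξ 0| ^ r.2 ))
        ≤ ((p.2 : ℝ) + 1) * (2 * S ^ p.2) := by
      refine sum_antidiag_le p.2 fun q hq => ?_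
      have hqk : q.1 + q.2 = p.2 := Finset.HasAntidiagonal.mem_antidiagonal.mp hq
      have e1 : |ξ 0| ^ q.2 * ∑ r ∈ antidiagonal q.1, |ξ 2| ^ r.1 * |ξ 1| ^ r.2
          ≤ S ^ p.2 := by
        calc |ξ 0| ^ q.2 * ∑ r ∈ antidiagonal q.1, |ξ 2| ^ r.1 * |ξ 1| ^ r.2
            ≤ S ^ q.2 * S ^ q.1 :=
              mul_le_mul (pow_le_pow_left₀ a0 h0 q.2) (antidiag_le_S a2 a1 h21 q.1)
                (antidiag_nonneg a2 a1 q.1) (pow_nonneg hS q.2)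
          _ = S ^ p.2 := by rw [← pow_add, Nat.add_comm, hqk]
      have e2 : |ξ 1| ^ q.1 * ∑ r ∈ antidiagonal q.2, |ξ 3| ^ r.1 * |ξ 0| ^ r.2
          ≤ S ^ p.2 := by
        calc |ξ 1| ^ q.1 * ∑ r ∈ antidiagonal q.2, |ξ 3| ^ r.1 * |ξ 0| ^ r.2
            ≤ S ^ q.1 * S ^ q.2 :=
              mul_le_mul (pow_le_pow_left₀ a1 h1 q.1) (antidiag_le_S a3 a0 h30 q.2)
                (antidiag_nonneg a3 a0 q.2) (pow_nonneg hS q.1)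
          _ = S ^ p.2 := by rw [← pow_add, hqk]
      linarith
    have hinner0 : 0 ≤ (∑ q ∈ antidiagonal p.2,
          ( |ξ 0| ^ q.2 * ∑ r ∈ antidiagonal q.1, |ξ 2| ^ r.1 * |ξ 1| ^ r.2
          + |ξ 1| ^ q.1 * ∑ r ∈ antidiagonal q.2, |ξ 3| ^ r.1 * |ξ 0| ^ r.2 )) := by
      refine Finset.sum_nonneg fun q _ => ?_
      have := antidiag_nonneg a2 a1 q.1
      have := antidiag_nonneg a3 a0 q.2
      positivity
    calc |ξ 3| ^ p.1 *
        ∑ q ∈ antidiagonal p.2,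
          ( |ξ 0| ^ q.2 * ∑ r ∈ antidiagonal q.1, |ξ 2| ^ r.1 * |ξ 1| ^ r.2
          + |ξ 1| ^ q.1 * ∑ r ∈ antidiagonal q.2, |ξ 3| ^ r.1 * |ξ 0| ^ r.2 )
        ≤ S ^ p.1 * (((p.2 : ℝ) + 1) * (2 * S ^ p.2)) :=
          mul_le_mul (pow_le_pow_left₀ a3 h3 p.1) hinner hinner0 (pow_nonneg hS p.1)
      _ = ((p.2 : ℝ) + 1) * (2 * (S ^ p.1 * S ^ p.2)) := by ring
      _ = ((p.2 : ℝ) + 1) * (2 * S ^ k) := by rw [← pow_add, hpk]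
      _ ≤ ((k : ℝ) + 1) * (2 * S ^ k) := by
          have : (0:ℝ) ≤ 2 * S ^ k := by positivity
          exact mul_le_mul_of_nonneg_right hp2k this
  have hkey : ((k : ℝ) + 1) * S ^ k ≤ ((k : ℝ) + 1) ^ 2 * S ^ k := by
    nlinarith [mul_nonneg (mul_nonneg (Nat.cast_nonneg k : (0:ℝ) ≤ (k:ℝ))
      (by positivity : (0:ℝ) ≤ (k:ℝ) + 1)) hSk]
  linarith [b1, b2, b3, b4, b5, b6, hkey]


lemma fact_expand (k : ℕ) : (k+4).factorial = (k+4)*((k+3)*((k+2)*((k+1)*k.factorial))) := by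
  rw [show k+4 = (k+3)+1 from rfl, Nat.factorial_succ,
      show k+3 = (k+2)+1 from rfl, Nat.factorial_succ,
      show k+2 = (k+1)+1 from rfl, Nat.factorial_succ, Nat.factorial_succ]

lemma step (σ S : ℝ) (hσ0 : 0 ≤ σ) (hσ1 : σ ≤ 1) (hS : 0 ≤ S) (k : ℕ) {Θ : ℝ} (hΘ0 : 0 ≤ Θ)
    (hΘ : Θ ≤ 76 * ((k:ℝ)+1)^2 * S ^ k) :
    σ ^ (k+4) / ((k+4).factorial : ℝ) * Θ * (1 + S)^2
      ≤ 76 * ((σ*S) ^ k / (k.factorial : ℝ)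
            + 2 * ((σ*S) ^ (k+1) / ((k+1).factorial : ℝ))
            + (σ*S) ^ (k+2) / ((k+2).factorial : ℝ)) := by
  set x := σ * S with hxdef
  have hx : 0 ≤ x := mul_nonneg hσ0 hS
  have f4pos : (0:ℝ) < ((k+4).factorial : ℝ) := by exact_mod_cast (k+4).factorial_pos
  have f0pos : (0:ℝ) < (k.factorial : ℝ) := by exact_mod_cast k.factorial_pos
  have f1pos : (0:ℝ) < ((k+1).factorial : ℝ) := by exact_mod_cast (k+1).factorial_pos
  have f2pos : (0:ℝ) < ((k+2).factorial : ℝ) := by exact_mod_cast (k+2).factorial_pos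
  -- factorial inequalities
  have n0 : ((k:ℝ)+1)^2 * (k.factorial : ℝ) ≤ ((k+4).factorial : ℝ) := by
    have : (k+1)^2 * k.factorial ≤ (k+4).factorial := by
      rw [fact_expand]
      calc (k+1)^2 * k.factorial ≤ ((k+4)*((k+3)*(k+2))*(k+1)) * k.factorial := by
            apply Nat.mul_le_mul_right; nlinarith
        _ = (k+4)*((k+3)*((k+2)*((k+1)*k.factorial))) := by ring
    exact_mod_cast this
  have n1 : ((k:ℝ)+1)^2 * ((k+1).factorial : ℝ) ≤ ((k+4).factorial : ℝ) := by
    have : (k+1)^2 * (k+1).factorial ≤ (k+4).factorial := by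
      rw [fact_expand, show (k+1).factorial = (k+1)*k.factorial from Nat.factorial_succ k]
      calc (k+1)^2 * ((k+1)*k.factorial) ≤ ((k+4)*((k+3)*(k+2)))*((k+1)*k.factorial) := by
            apply Nat.mul_le_mul_right; nlinarith
        _ = (k+4)*((k+3)*((k+2)*((k+1)*k.factorial))) := by ring
    exact_mod_cast this
  have n2 : ((k:ℝ)+1)^2 * ((k+2).factorial : ℝ) ≤ ((k+4).factorial : ℝ) := by
    have : (k+1)^2 * (k+2).factorial ≤ (k+4).factorial := by
      rw [fact_expand, show (k+2).factorial = (k+2)*((k+1)*k.factorial) by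
        rw [show k+2 = (k+1)+1 from rfl, Nat.factorial_succ, Nat.factorial_succ]]
      calc (k+1)^2 * ((k+2)*((k+1)*k.factorial))
            ≤ ((k+4)*(k+3))*((k+2)*((k+1)*k.factorial)) := by
            apply Nat.mul_le_mul_right; nlinarith
        _ = (k+4)*((k+3)*((k+2)*((k+1)*k.factorial))) := by ring
    exact_mod_cast this
  -- power inequalities
  have c1 : σ ^ (k+4) * S ^ k ≤ x ^ k := by
    calc σ ^ (k+4) * S ^ k = (x ^ k) * σ ^ 4 := by
          rw [hxdef, mul_pow, pow_add]; ring
      _ ≤ (x ^ k) * 1 := mul_le_mul_of_nonneg_left (pow_le_one₀ hσ0 hσ1) (pow_nonneg hx k)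
      _ = x ^ k := mul_one _
  have c2 : σ ^ (k+4) * S ^ (k+1) ≤ x ^ (k+1) := by
    calc σ ^ (k+4) * S ^ (k+1) = (x ^ (k+1)) * σ ^ 3 := by
          rw [hxdef, mul_pow, show k+4 = (k+1)+3 from rfl, pow_add]; ring
      _ ≤ (x ^ (k+1)) * 1 := mul_le_mul_of_nonneg_left (pow_le_one₀ hσ0 hσ1) (pow_nonneg hx _)
      _ = x ^ (k+1) := mul_one _
  have c3 : σ ^ (k+4) * S ^ (k+2) ≤ x ^ (k+2) := by
    calc σ ^ (k+4) * S ^ (k+2) = (x ^ (k+2)) * σ ^ 2 := by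
          rw [hxdef, mul_pow, show k+4 = (k+2)+2 from rfl, pow_add]; ring
      _ ≤ (x ^ (k+2)) * 1 := mul_le_mul_of_nonneg_left (pow_le_one₀ hσ0 hσ1) (pow_nonneg hx _)
      _ = x ^ (k+2) := mul_one _
  have expand : S ^ k * (1+S)^2 = S ^ k + 2*S^(k+1) + S^(k+2) := by
    rw [show k+2 = (k+1)+1 from rfl, pow_succ, pow_succ]; ring
  have hσp : 0 ≤ σ ^ (k+4) := pow_nonneg hσ0 _
  -- numerator bound
  have numer : σ ^ (k+4) * Θ * (1+S)^2
      ≤ 76 * ((k:ℝ)+1)^2 * (x ^ k + 2*x^(k+1) + x^(k+2)) := by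
    have s1 : σ ^ (k+4) * Θ * (1+S)^2 ≤ σ ^ (k+4) * (76 * ((k:ℝ)+1)^2 * S ^ k) * (1+S)^2 := by
      have h2 : (0:ℝ) ≤ (1+S)^2 := sq_nonneg _
      exact mul_le_mul_of_nonneg_right (mul_le_mul_of_nonneg_left hΘ hσp) h2
    have s2 : σ ^ (k+4) * (76 * ((k:ℝ)+1)^2 * S ^ k) * (1+S)^2
        = 76 * ((k:ℝ)+1)^2 * (σ^(k+4) * S^k + 2*(σ^(k+4)*S^(k+1)) + σ^(k+4)*S^(k+2)) := by
      have : σ ^ (k+4) * (S ^ k * (1+S)^2) = σ^(k+4) * (S ^ k + 2*S^(k+1) + S^(k+2)) := by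
        rw [expand]
      nlinarith [this]
    have s3 : 76 * ((k:ℝ)+1)^2 * (σ^(k+4) * S^k + 2*(σ^(k+4)*S^(k+1)) + σ^(k+4)*S^(k+2))
        ≤ 76 * ((k:ℝ)+1)^2 * (x ^ k + 2*x^(k+1) + x^(k+2)) := by
      apply mul_le_mul_of_nonneg_left (by linarith) (by positivity)
    linarith
  -- divide
  have main : σ ^ (k+4) / ((k+4).factorial : ℝ) * Θ * (1 + S)^2
      ≤ 76 * ((k:ℝ)+1)^2 * (x ^ k + 2*x^(k+1) + x^(k+2)) / ((k+4).factorial : ℝ) := by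
    rw [show σ ^ (k+4) / ((k+4).factorial : ℝ) * Θ * (1 + S)^2
        = σ ^ (k+4) * Θ * (1+S)^2 / ((k+4).factorial : ℝ) by ring]
    exact div_le_div_of_nonneg_right numer f4pos.le |>.trans_eq rfl
  have B0 : ((k:ℝ)+1)^2 * x ^ k / ((k+4).factorial : ℝ) ≤ x ^ k / (k.factorial : ℝ) := by
    rw [div_le_div_iff₀ f4pos f0pos]
    calc ((k:ℝ)+1)^2 * x ^ k * (k.factorial : ℝ) = x ^ k * (((k:ℝ)+1)^2 * (k.factorial:ℝ)) := by
          ring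
      _ ≤ x ^ k * ((k+4).factorial : ℝ) := mul_le_mul_of_nonneg_left n0 (pow_nonneg hx k)
  have B1 : ((k:ℝ)+1)^2 * x ^ (k+1) / ((k+4).factorial : ℝ)
      ≤ x ^ (k+1) / ((k+1).factorial : ℝ) := by
    rw [div_le_div_iff₀ f4pos f1pos]
    calc ((k:ℝ)+1)^2 * x ^ (k+1) * ((k+1).factorial : ℝ)
          = x ^ (k+1) * (((k:ℝ)+1)^2 * ((k+1).factorial:ℝ)) := by ring
      _ ≤ x ^ (k+1) * ((k+4).factorial : ℝ) := mul_le_mul_of_nonneg_left n1 (pow_nonneg hx _)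
  have B2 : ((k:ℝ)+1)^2 * x ^ (k+2) / ((k+4).factorial : ℝ)
      ≤ x ^ (k+2) / ((k+2).factorial : ℝ) := by
    rw [div_le_div_iff₀ f4pos f2pos]
    calc ((k:ℝ)+1)^2 * x ^ (k+2) * ((k+2).factorial : ℝ)
          = x ^ (k+2) * (((k:ℝ)+1)^2 * ((k+2).factorial:ℝ)) := by ring
      _ ≤ x ^ (k+2) * ((k+4).factorial : ℝ) := mul_le_mul_of_nonneg_left n2 (pow_nonneg hx _)
  have split : 76 * ((k:ℝ)+1)^2 * (x ^ k + 2*x^(k+1) + x^(k+2)) / ((k+4).factorial : ℝ)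
      = 76 * (((k:ℝ)+1)^2 * x ^ k / ((k+4).factorial : ℝ))
      + 152 * (((k:ℝ)+1)^2 * x ^ (k+1) / ((k+4).factorial : ℝ))
      + 76 * (((k:ℝ)+1)^2 * x ^ (k+2) / ((k+4).factorial : ℝ)) := by ring
  linarith [main, B0, B1, B2, split.le, split.ge]


set_option maxHeartbeats 1000000 in
/-- The key pointwise bound behind Lemma 3.6: there is a constant `C > 0` such that
for all `0 ≤ σ ≤ 1` and all `ξ1 + ξ2 + ξ3 + ξ4 = 0`,
`Σ_{k=0}^∞ (σ^{k+4}/(k+4)!) (Θ1(k) + Θ2(k))` is bounded by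
`C · (Σ_{p1 ≠ p2} 1/((1+|ξ_{p1}|)(1+|ξ_{p2}|))) · e^{σ(|ξ1|+|ξ2|+|ξ3|+|ξ4|)}`,
the pair sum ranging over ordered pairs of distinct indices in `{1, 2, 3, 4}`. -/
theorem Theta_sum_series_bound_decay :
    ∃ C : ℝ, 0 < C ∧ ∀ σ : ℝ, 0 ≤ σ → σ ≤ 1 → ∀ ξ : Fin 4 → ℝ,
      ξ 0 + ξ 1 + ξ 2 + ξ 3 = 0 →
      ∑' k : ℕ, σ ^ (k + 4) / (Nat.factorial (k + 4) : ℝ) * (Theta1 ξ k + Theta2 ξ k)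
        ≤ C * (∑ t ∈ (Finset.univ : Finset (Fin 4 × Fin 4)).filter (fun t => t.1 ≠ t.2),
                 1 / ((1 + |ξ t.1|) * (1 + |ξ t.2|))) *
            Real.exp (σ * (|ξ 0| + |ξ 1| + |ξ 2| + |ξ 3|)) := by
  refine ⟨304, by norm_num, fun σ hσ0 hσ1 ξ hsum => ?_⟩
  set S := |ξ 0| + |ξ 1| + |ξ 2| + |ξ 3| with hSdef
  have hS : 0 ≤ S := by positivity
  set x := σ * S with hxdef
  have hx : 0 ≤ x := mul_nonneg hσ0 hS
  have hθ0 : ∀ k : ℕ, 0 ≤ Theta1 ξ k + Theta2 ξ k :=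
    fun k => add_nonneg (theta1_nonneg ξ k) (theta2_nonneg ξ k)
  have hθ : ∀ k : ℕ, Theta1 ξ k + Theta2 ξ k ≤ 76 * ((k:ℝ)+1)^2 * S ^ k := by
    intro k
    have t1 := theta1_le ξ hsum k
    have t2 := theta2_le ξ k
    have hSk : (0:ℝ) ≤ S ^ k := pow_nonneg hS k
    have h68 : 68 * ((k:ℝ)+1) * S^k ≤ 68 * ((k:ℝ)+1)^2 * S^k := by
      nlinarith [mul_nonneg (mul_nonneg (Nat.cast_nonneg k : (0:ℝ) ≤ (k:ℝ))
        (by positivity : (0:ℝ) ≤ (k:ℝ) + 1)) hSk]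
    linarith
  -- the series terms
  have hf0 : ∀ k : ℕ, 0 ≤ σ ^ (k + 4) / ((k+4).factorial : ℝ) * (Theta1 ξ k + Theta2 ξ k) := by
    intro k
    have : (0:ℝ) ≤ σ ^ (k+4) / ((k+4).factorial : ℝ) := by positivity
    exact mul_nonneg this (hθ0 k)
  have hstep : ∀ k : ℕ,
      σ ^ (k + 4) / ((k+4).factorial : ℝ) * (Theta1 ξ k + Theta2 ξ k) * (1 + S)^2
        ≤ 76 * (x ^ k / (k.factorial : ℝ)
            + 2 * (x ^ (k+1) / ((k+1).factorial : ℝ))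
            + x ^ (k+2) / ((k+2).factorial : ℝ)) :=
    fun k => step σ S hσ0 hσ1 hS k (hθ0 k) (hθ k)
  -- summability
  have sg0 : Summable (fun k : ℕ => x ^ k / (k.factorial : ℝ)) :=
    Real.summable_pow_div_factorial x
  have sg1 : Summable (fun k : ℕ => x ^ (k+1) / ((k+1).factorial : ℝ)) :=
    (summable_nat_add_iff 1).mpr sg0
  have sg2 : Summable (fun k : ℕ => x ^ (k+2) / ((k+2).factorial : ℝ)) :=
    (summable_nat_add_iff 2).mpr sg0
  have sg : Summable (fun k : ℕ => 76 * (x ^ k / (k.factorial : ℝ)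
      + 2 * (x ^ (k+1) / ((k+1).factorial : ℝ)) + x ^ (k+2) / ((k+2).factorial : ℝ))) :=
    (((sg0.add (sg1.mul_left 2)).add sg2).mul_left 76)
  have hone : (1:ℝ) ≤ (1 + S)^2 := by nlinarith
  have hfle : ∀ k : ℕ, σ ^ (k + 4) / ((k+4).factorial : ℝ) * (Theta1 ξ k + Theta2 ξ k)
      ≤ 76 * (x ^ k / (k.factorial : ℝ)
          + 2 * (x ^ (k+1) / ((k+1).factorial : ℝ)) + x ^ (k+2) / ((k+2).factorial : ℝ)) := by
    intro k
    have h1 : σ ^ (k + 4) / ((k+4).factorial : ℝ) * (Theta1 ξ k + Theta2 ξ k)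
        ≤ σ ^ (k + 4) / ((k+4).factorial : ℝ) * (Theta1 ξ k + Theta2 ξ k) * (1 + S)^2 :=
      le_mul_of_one_le_right (hf0 k) hone
    exact h1.trans (hstep k)
  have sf : Summable (fun k : ℕ =>
      σ ^ (k + 4) / ((k+4).factorial : ℝ) * (Theta1 ξ k + Theta2 ξ k)) :=
    Summable.of_nonneg_of_le hf0 hfle sg
  -- tsum bound
  have h2 : ∑' k : ℕ, σ ^ (k + 4) / ((k+4).factorial : ℝ) * (Theta1 ξ k + Theta2 ξ k) * (1+S)^2
      ≤ ∑' k : ℕ, 76 * (x ^ k / (k.factorial : ℝ)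
          + 2 * (x ^ (k+1) / ((k+1).factorial : ℝ)) + x ^ (k+2) / ((k+2).factorial : ℝ)) :=
    Summable.tsum_le_tsum hstep (sf.mul_right _) sg
  have e0 : ∑' k : ℕ, x ^ k / (k.factorial : ℝ) = Real.exp x := by
    rw [Real.exp_eq_exp_ℝ, NormedSpace.exp_eq_tsum_div]
  have expos := Real.exp_pos x
  have e1 : ∑' k : ℕ, x ^ (k+1) / ((k+1).factorial : ℝ) ≤ Real.exp x := by
    rw [← e0]
    exact Summable.tsum_le_tsum_of_inj (fun n => n + 1) (add_left_injective 1)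
      (fun c _ => by positivity) (fun n => le_rfl) sg1 sg0
  have e2 : ∑' k : ℕ, x ^ (k+2) / ((k+2).factorial : ℝ) ≤ Real.exp x := by
    rw [← e0]
    exact Summable.tsum_le_tsum_of_inj (fun n => n + 2) (add_left_injective 2)
      (fun c _ => by positivity) (fun n => le_rfl) sg2 sg0
  have h3 : ∑' k : ℕ, 76 * (x ^ k / (k.factorial : ℝ)
      + 2 * (x ^ (k+1) / ((k+1).factorial : ℝ)) + x ^ (k+2) / ((k+2).factorial : ℝ))
      ≤ 304 * Real.exp x := by
    rw [tsum_mul_left, Summable.tsum_add (sg0.add (sg1.mul_left 2)) sg2,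
        Summable.tsum_add sg0 (sg1.mul_left 2), tsum_mul_left, e0]
    linarith [e1, e2]
  have hmul : (∑' k : ℕ, σ ^ (k + 4) / ((k+4).factorial : ℝ) * (Theta1 ξ k + Theta2 ξ k))
      * (1+S)^2 ≤ 304 * Real.exp x := by
    rw [← tsum_mul_right]
    exact h2.trans h3
  -- pair sum lower bound
  set P := ∑ t ∈ (Finset.univ : Finset (Fin 4 × Fin 4)).filter (fun t => t.1 ≠ t.2),
      1 / ((1 + |ξ t.1|) * (1 + |ξ t.2|)) with hPdef
  have hP : 1 / (1+S)^2 ≤ P := by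
    have hmem : ((0 : Fin 4), (1 : Fin 4)) ∈
        (Finset.univ : Finset (Fin 4 × Fin 4)).filter (fun t => t.1 ≠ t.2) :=
      Finset.mem_filter.mpr ⟨Finset.mem_univ _, by decide⟩
    have hterm : 1 / (1+S)^2 ≤ 1 / ((1 + |ξ 0|) * (1 + |ξ 1|)) := by
      apply one_div_le_one_div_of_le
      · positivity
      · have := abs_nonneg (ξ 0); have := abs_nonneg (ξ 1)
        have := abs_nonneg (ξ 2); have := abs_nonneg (ξ 3)
        nlinarith
    refine hterm.trans ?_
    refine Finset.single_le_sum (f := fun t : Fin 4 × Fin 4 =>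
        1 / ((1 + |ξ t.1|) * (1 + |ξ t.2|))) (fun t _ => by positivity) hmem
  have hPos : (0:ℝ) < (1+S)^2 := by positivity
  have hfinal : (∑' k : ℕ, σ ^ (k + 4) / ((k+4).factorial : ℝ) * (Theta1 ξ k + Theta2 ξ k))
      ≤ 304 * Real.exp x / (1+S)^2 := by
    rw [le_div_iff₀ hPos]; exact hmul
  refine hfinal.trans ?_
  have : 304 * Real.exp x / (1+S)^2 = 304 * (1/(1+S)^2) * Real.exp x := by ring
  rw [this]
  have h304 : 304 * (1/(1+S)^2) ≤ 304 * P := by linarith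
  exact mul_le_mul_of_nonneg_right h304 expos.le
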